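/- arXiv:cs/0403011 — 2 statements merged into one kernel-verified Lean document; each statement's English description precedes it below -/
import Mathlib

section
/- In any needed narrowing step with canonical substitution decomposition phi_k ∘ ... ∘ phi_1 computed by the function λ (the needed narrowing strategy), each phi_i is either the identity substitution or a single-variable binding {x ↦ c(x_1,...,x_n)} where c is a constructor, x_1,...,x_n are pairwise distinct fresh variables, and x occurs in (phi_{i-1} ∘ ... ∘ phi_1)(t). -/
namespace PE

/-- First-order terms in applicative form over constructors `C`,
defined operation symbols `F`, and natural-number variables. -/
inductive Tm (C F : Type) : Type
  | var : ℕ → Tm C F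
  | con : C → Tm C F
  | op  : F → Tm C F
  | app : Tm C F → Tm C F → Tm C F

namespace Tm

variable {C F : Type}

/-- Application of a substitution. -/
def subst (σ : ℕ → Tm C F) : Tm C F → Tm C F
  | var x => σ x
  | con c => con c
  | op f => op f
  | app s t => app (s.subst σ) (t.subst σ)

/-- The subterm at a position (positions are lists of left/right directions). -/
def subtermAt : Tm C F → List Bool → Option (Tm C F)
  | t, [] => some t
  | app s _, false :: p => s.subtermAt p
  | app _ t, true :: p => t.subtermAt p
  | _, _ => none

/-- Replacing the subterm at a position. -/
def replaceAt : Tm C F → List Bool → Tm C F → Tm C F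
  | _, [], u => u
  | app s t, false :: p, u => app (s.replaceAt p u) t
  | app s t, true :: p, u => app s (t.replaceAt p u)
  | t, _ :: _, _ => t

/-- The set of variables of a term. -/
def vars : Tm C F → Set ℕ
  | var x => {x}
  | con _ => ∅
  | op _ => ∅
  | app s t => s.vars ∪ t.vars

/-- Number of occurrences of a variable. -/
def varCount (x : ℕ) : Tm C F → ℕ
  | var y => if y = x then 1 else 0
  | con _ => 0
  | op _ => 0
  | app s t => s.varCount x + t.varCount x

/-- A term is linear if no variable occurs twice. -/
def Linear (t : Tm C F) : Prop := ∀ x, t.varCount x ≤ 1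

/-- The head (root) symbol of a term, as a term. -/
def head : Tm C F → Tm C F
  | app s _ => s.head
  | t => t

/-- Number of arguments of the spine. -/
def numArgs : Tm C F → ℕ
  | app s _ => s.numArgs + 1
  | _ => 0

/-- Operation-rooted term. -/
def OpRooted (t : Tm C F) : Prop := ∃ f : F, t.head = op f

/-- Constructor-rooted term. -/
def ConRooted (t : Tm C F) : Prop := ∃ c : C, t.head = con c

/-- A constructor term: no defined operation symbol occurs. -/
def NoOps : Tm C F → Prop
  | var _ => True
  | con _ => True
  | op _ => False
  | app s t => NoOps s ∧ NoOps t

/-- A pattern: a defined operation applied to constructor terms. -/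
def IsPattern : Tm C F → Prop
  | op _ => True
  | app s t => IsPattern s ∧ NoOps t
  | _ => False

/-- The set of operation symbols occurring in a term. -/
def opsIn : Tm C F → Set F
  | var _ => ∅
  | con _ => ∅
  | op f => {f}
  | app s t => s.opsIn ∪ t.opsIn

/-- The distinct variables of a term in left-to-right order. -/
def varList : Tm C F → List ℕ
  | var x => [x]
  | con _ => []
  | op _ => []
  | app s t => s.varList ++ (t.varList.filter (fun x => !(s.varList.contains x)))

end Tm

/-- Substitutions. -/
abbrev Subst (C F : Type) := ℕ → Tm C F

/-- The identity substitution. -/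
def idS {C F : Type} : Subst C F := Tm.var

/-- Composition: apply `σ` first, then `τ`. -/
def compS {C F : Type} (σ τ : Subst C F) : Subst C F := fun x => (σ x).subst τ

/-- Composition `φₖ ∘ ⋯ ∘ φ₁` of a list of substitutions (head applied first). -/
def compList {C F : Type} (φs : List (Subst C F)) : Subst C F :=
  fun x => φs.foldl (fun t φ => t.subst φ) (Tm.var x)

/-- The single-variable binding `{x ↦ u}`. -/
def single {C F : Type} (x : ℕ) (u : Tm C F) : Subst C F :=
  fun y => if y = x then u else Tm.var y

/-- A head symbol applied to a list of variables. -/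
def appVars {C F : Type} (h : Tm C F) (xs : List ℕ) : Tm C F :=
  xs.foldl (fun t x => Tm.app t (Tm.var x)) h

/-- A constructor substitution: all bindings are constructor terms. -/
def ConstrSubst {C F : Type} (σ : Subst C F) : Prop := ∀ x, (σ x).NoOps

/-- A rewrite rule `l → r`. -/
abbrev Rule (C F : Type) := Tm C F × Tm C F

/-- A term rewriting system. -/
abbrev TRS (C F : Type) := Set (Rule C F)

/-- Subsumption ordering: `t` is an instance of `s`. -/
def Subsumes {C F : Type} (s t : Tm C F) : Prop := ∃ σ : Subst C F, t = s.subst σ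

def StrictSub {C F : Type} (s t : Tm C F) : Prop := Subsumes s t ∧ ¬ Subsumes t s

def Variant {C F : Type} (s t : Tm C F) : Prop := Subsumes s t ∧ Subsumes t s

def RuleVariant {C F : Type} (r₁ r₂ : Rule C F) : Prop :=
  (∃ σ : Subst C F, r₂.1 = r₁.1.subst σ ∧ r₂.2 = r₁.2.subst σ) ∧
  (∃ τ : Subst C F, r₁.1 = r₂.1.subst τ ∧ r₁.2 = r₂.2.subst τ)

/-- A rewrite step with a given rule at a given position. -/
def RewriteAtRule {C F : Type} (r : Rule C F) (p : List Bool) (t t' : Tm C F) : Prop :=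
  ∃ σ : Subst C F, t.subtermAt p = some (r.1.subst σ) ∧ t' = t.replaceAt p (r.2.subst σ)

/-- One rewrite step in a TRS. -/
def Rew {C F : Type} (R : TRS C F) (t t' : Tm C F) : Prop :=
  ∃ r ∈ R, ∃ p, RewriteAtRule r p t t'

def RewStar {C F : Type} (R : TRS C F) : Tm C F → Tm C F → Prop :=
  Relation.ReflTransGen (Rew R)

def RewPlus {C F : Type} (R : TRS C F) : Tm C F → Tm C F → Prop :=
  Relation.TransGen (Rew R)

/-- A redex: an instance of a left-hand side. -/
def IsRedex {C F : Type} (R : TRS C F) (t : Tm C F) : Prop :=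
  ∃ r ∈ R, ∃ σ : Subst C F, t = r.1.subst σ

/-- Root-stable (head-normal form): cannot be rewritten to a redex. -/
def RootStable {C F : Type} (R : TRS C F) (t : Tm C F) : Prop :=
  ∀ u, RewStar R t u → ¬ IsRedex R u

/-- Root-normalizing: has a root-stable reduct. -/
def RootNormalizing {C F : Type} (R : TRS C F) (t : Tm C F) : Prop :=
  ∃ u, RewStar R t u ∧ RootStable R u

/-- A left-linear constructor-based TRS (a functional logic program). -/
def LLCB {C F : Type} (R : TRS C F) : Prop :=
  ∀ r ∈ R, r.1.Linear ∧ r.1.IsPattern ∧ r.2.vars ⊆ r.1.vars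

/-- A rewrite step at a position strictly below the root. -/
def InnerRew {C F : Type} (R : TRS C F) (t t' : Tm C F) : Prop :=
  ∃ r ∈ R, ∃ p, p ≠ [] ∧ RewriteAtRule r p t t'

/-- Weakly orthogonal: left-linear and all critical pairs are trivial. -/
def WeaklyOrthogonal {C F : Type} (R : TRS C F) : Prop :=
  (∀ r ∈ R, r.1.Linear) ∧
  ∀ r ∈ R, ∀ r' ∈ R, ∀ (p : List Bool) (u : Tm C F) (σ σ' : Subst C F),
    r.1.subtermAt p = some u → (∀ x, u ≠ Tm.var x) →
    u.subst σ = r'.1.subst σ' →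
    (r.1.subst σ).replaceAt p (r'.2.subst σ') = r.2.subst σ

/-- Almost orthogonal: left-linear and all critical pairs are trivial overlays. -/
def AlmostOrthogonal {C F : Type} (R : TRS C F) : Prop :=
  (∀ r ∈ R, r.1.Linear) ∧
  ∀ r ∈ R, ∀ r' ∈ R, ∀ (p : List Bool) (u : Tm C F) (σ σ' : Subst C F),
    r.1.subtermAt p = some u → (∀ x, u ≠ Tm.var x) →
    u.subst σ = r'.1.subst σ' →
    p = [] ∧ r.2.subst σ = r'.2.subst σ'

/- ### Definitional trees -/

def IsMinimum {C F : Type} (T : Set (Tm C F)) (π : Tm C F) : Prop :=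
  π ∈ T ∧ ∀ t ∈ T, Subsumes π t

def IsMaximalIn {C F : Type} (T : Set (Tm C F)) (t : Tm C F) : Prop :=
  t ∈ T ∧ ∀ u ∈ T, ¬ StrictSub t u

/-- `π'` is a child of `π` in `T`: an immediate successor with no pattern strictly between. -/
def IsChildIn {C F : Type} (T : Set (Tm C F)) (π π' : Tm C F) : Prop :=
  π ∈ T ∧ π' ∈ T ∧ StrictSub π π' ∧
    ¬ ∃ π'' : Tm C F, π''.IsPattern ∧ π''.Linear ∧ StrictSub π π'' ∧ StrictSub π'' π'

/-- `xs` is a list of fresh pairwise distinct variables w.r.t. `π`. -/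
def conAppFresh {C F : Type} (π : Tm C F) (_c : C) (xs : List ℕ) : Prop :=
  xs.Nodup ∧ ∀ x ∈ xs, x ∉ π.vars

/-- `T` is a definitional tree of the finite set `S` of linear patterns. -/
def IsDefTreeOf {C F : Type} (T S : Set (Tm C F)) : Prop :=
  T.Nonempty ∧ T.Finite ∧
  (∀ t ∈ T, t.Linear ∧ t.IsPattern) ∧
  -- Root property
  (∃ π, IsMinimum T π) ∧
  -- Leaves property: the maximal elements of T are exactly the elements of S
  (∀ t ∈ T, (t ∈ S ↔ IsMaximalIn T t)) ∧ S ⊆ T ∧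
  -- Parent property
  (∀ π' ∈ T, ¬ IsMinimum T π' → ∃! π, IsChildIn T π π') ∧
  -- Induction property
  (∀ π ∈ T, ¬ IsMaximalIn T π →
    ∃ (o : List Bool) (x : ℕ), π.subtermAt o = some (Tm.var x) ∧
      (∀ π', IsChildIn T π π' →
        ∃ c xs, conAppFresh π c xs ∧ π' = π.replaceAt o (appVars (Tm.con c) xs)) ∧
      (∀ π₁ π₂, IsChildIn T π π₁ → IsChildIn T π π₂ →
        ∀ c₁ xs₁ c₂ xs₂, π₁ = π.replaceAt o (appVars (Tm.con c₁) xs₁) →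
          π₂ = π.replaceAt o (appVars (Tm.con c₂) xs₂) → c₁ = c₂ → π₁ = π₂))

/-- `T` is a definitional tree for the defined function `f` of the TRS `R`. -/
def IsDefTreeFor {C F : Type} (R : TRS C F) (f : F) (T : Set (Tm C F)) : Prop :=
  ∃ S : Set (Tm C F),
    IsDefTreeOf T S ∧
    (∀ l ∈ S, ∃ lr ∈ R, lr.1.head = Tm.op f ∧ Variant lr.1 l) ∧
    (∀ lr ∈ R, lr.1.head = Tm.op f → ∃ l ∈ S, Variant lr.1 l) ∧
    (∃ xs : List ℕ, xs.Nodup ∧ IsMinimum T (appVars (Tm.op f) xs))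

/-- An inductively sequential TRS: every defined function has a definitional tree. -/
def InductivelySequential {C F : Type} (R : TRS C F) : Prop :=
  LLCB R ∧ ∀ f : F, (∃ r ∈ R, r.1.head = Tm.op f) → ∃ T, IsDefTreeFor R f T

/-- An inductively sequential program: rules together with a fixed definitional
tree for each defined function. -/
structure ISProg (C F : Type) where
  rules : TRS C F
  llcb : LLCB rules
  dt : F → Set (Tm C F)
  dt_ok : ∀ f : F, (∃ r ∈ rules, r.1.head = Tm.op f) → IsDefTreeFor rules f (dt f)

/-- The subtree of `T` whose patterns are the instances of `πi`. -/
def subtree {C F : Type} (T : Set (Tm C F)) (πi : Tm C F) : Set (Tm C F) :=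
  {π' ∈ T | Subsumes πi π'}

/-- `o` is the inductive position of the branch node `π` in `T`. -/
def InductivePosOf {C F : Type} (T : Set (Tm C F)) (π : Tm C F) (o : List Bool) : Prop :=
  (∃ x, π.subtermAt o = some (Tm.var x)) ∧
  ∀ π', IsChildIn T π π' →
    ∃ c xs, conAppFresh π c xs ∧ π' = π.replaceAt o (appVars (Tm.con c) xs)

/- ### The needed narrowing strategy λ -/

/-- The needed narrowing strategy `λ(t, T)`, as a relation: `NN P t T p r φs` means
`(p, r, φₖ ∘ ⋯ ∘ φ₁) ∈ λ(t, T)` with canonical local substitutions `φs` (head first). -/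
inductive NN {C F : Type} (P : ISProg C F) :
    Tm C F → Set (Tm C F) → List Bool → Rule C F → List (Subst C F) → Prop where
  | leaf (t π r : Tm C F)
      (hrule : ∃ lr ∈ P.rules, RuleVariant lr (π, r)) :
      NN P t {π} [] (π, r) [idS]
  | branchVar (t : Tm C F) (T : Set (Tm C F)) (π : Tm C F) (o : List Bool)
      (x : ℕ) (c : C) (xs : List ℕ) (πi : Tm C F) (p : List Bool) (r : Rule C F)
      (φs : List (Subst C F))
      (hmin : IsMinimum T π) (hbr : ¬ IsMaximalIn T π)
      (hip : InductivePosOf T π o)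
      (hchild : IsChildIn T π πi)
      (hfresh : conAppFresh π c xs)
      (hform : πi = π.replaceAt o (appVars (Tm.con c) xs))
      (hvar : t.subtermAt o = some (Tm.var x))
      (hrec : NN P (t.subst (single x (appVars (Tm.con c) xs))) (subtree T πi) p r φs) :
      NN P t T p r (single x (appVars (Tm.con c) xs) :: φs)
  | branchCon (t : Tm C F) (T : Set (Tm C F)) (π : Tm C F) (o : List Bool)
      (u : Tm C F) (c : C) (xs : List ℕ) (πi : Tm C F) (p : List Bool) (r : Rule C F)
      (φs : List (Subst C F))
      (hmin : IsMinimum T π) (hbr : ¬ IsMaximalIn T π)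
      (hip : InductivePosOf T π o)
      (hchild : IsChildIn T π πi)
      (hfresh : conAppFresh π c xs)
      (hform : πi = π.replaceAt o (appVars (Tm.con c) xs))
      (hsub : t.subtermAt o = some u) (hhead : u.head = Tm.con c)
      (hrec : NN P t (subtree T πi) p r φs) :
      NN P t T p r (idS :: φs)
  | branchOp (t : Tm C F) (T : Set (Tm C F)) (π : Tm C F) (o : List Bool)
      (u : Tm C F) (g : F) (p : List Bool) (r : Rule C F) (φs : List (Subst C F))
      (hmin : IsMinimum T π) (hbr : ¬ IsMaximalIn T π)
      (hip : InductivePosOf T π o)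
      (hsub : t.subtermAt o = some u) (hhead : u.head = Tm.op g)
      (hrec : NN P u (P.dt g) p r φs) :
      NN P t T (o ++ p) r (idS :: φs)

/-- `(p, r, σ)` is a needed narrowing step for the operation-rooted term `t`. -/
def NNStepTriple {C F : Type} (P : ISProg C F) (t : Tm C F)
    (p : List Bool) (r : Rule C F) (σ : Subst C F) : Prop :=
  ∃ (f : F) (φs : List (Subst C F)),
    t.head = Tm.op f ∧ NN P t (P.dt f) p r φs ∧ σ = compList φs

/-- One needed narrowing step `t ↝_σ t'`. -/
def NNRed {C F : Type} (P : ISProg C F) (t : Tm C F) (σ : Subst C F) (t' : Tm C F) : Prop :=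
  ∃ p r, NNStepTriple P t p r σ ∧ RewriteAtRule r p (t.subst σ) t'

/-- A needed narrowing derivation `t ↝*_σ t'` with composed answer substitution. -/
inductive NNDeriv {C F : Type} (P : ISProg C F) : Tm C F → Subst C F → Tm C F → Prop where
  | refl (t : Tm C F) : NNDeriv P t idS t
  | step {t t₁ t₂ : Tm C F} {σ τ : Subst C F} :
      NNRed P t σ t₁ → NNDeriv P t₁ τ t₂ → NNDeriv P t (compS σ τ) t₂

/-- The strategy λ yields at most one step for `t` (a deterministic step). -/
def Deterministic {C F : Type} (P : ISProg C F) (t : Tm C F) : Prop :=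
  ∀ p₁ r₁ σ₁ p₂ r₂ σ₂, NNStepTriple P t p₁ r₁ σ₁ → NNStepTriple P t p₂ r₂ σ₂ →
    p₁ = p₂ ∧ r₁ = r₂ ∧ σ₁ = σ₂

/-- Deterministically evaluable: every step in every needed narrowing derivation
issuing from `t` is deterministic. -/
def DetEvaluable {C F : Type} (P : ISProg C F) (t : Tm C F) : Prop :=
  ∀ u σ, NNDeriv P t σ u → Deterministic P u

/- ### Generic narrowing -/

/-- One narrowing step with answer `σ` (at a non-variable position). -/
def NarrowStep {C F : Type} (R : TRS C F) (t : Tm C F) (σ : Subst C F) (t' : Tm C F) : Prop :=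
  ∃ r ∈ R, ∃ (p : List Bool) (u : Tm C F), t.subtermAt p = some u ∧
    (∀ x, u ≠ Tm.var x) ∧ RewriteAtRule r p (t.subst σ) t'

/-- A narrowing derivation with at least one step, composing the answers. -/
inductive NarrowPlus {C F : Type} (R : TRS C F) : Tm C F → Subst C F → Tm C F → Prop where
  | single {t σ t'} : NarrowStep R t σ t' → NarrowPlus R t σ t'
  | cons {t σ t₁ τ t₂} : NarrowStep R t σ t₁ → NarrowPlus R t₁ τ t₂ →
      NarrowPlus R t (compS σ τ) t₂

/- ### Rewrite sequences with explicit step data, and descendants -/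

/-- A rewrite sequence recording the positions and rules of its steps. -/
inductive RewSeq {C F : Type} (R : TRS C F) :
    Tm C F → List (List Bool × Rule C F) → Tm C F → Prop where
  | refl (t : Tm C F) : RewSeq R t [] t
  | step {t t' t'' : Tm C F} {p : List Bool} {r : Rule C F}
      {steps : List (List Bool × Rule C F)} :
      r ∈ R → RewriteAtRule r p t t' → RewSeq R t' steps t'' →
      RewSeq R t ((p, r) :: steps) t''

/-- Descendants of position `v` under a rewrite step at `u` with rule `r`. -/
def descend {C F : Type} (u : List Bool) (r : Rule C F) (v : List Bool) :
    Set (List Bool) :=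
  {w | (¬ u <+: v ∧ w = v) ∨
       (∃ (x : ℕ) (p q p' : List Bool), v = u ++ p ++ q ∧
          r.1.subtermAt p = some (Tm.var x) ∧ r.2.subtermAt p' = some (Tm.var x) ∧
          w = u ++ p' ++ q)}

def descendSet {C F : Type} (s : List Bool × Rule C F) (P : Set (List Bool)) :
    Set (List Bool) :=
  ⋃ v ∈ P, descend s.1 s.2 v

def descendSeq {C F : Type} : List (List Bool × Rule C F) → Set (List Bool) → Set (List Bool)
  | [], P => P
  | s :: ss, P => descendSeq ss (descendSet s P)

/-- Fold a replacement of the subterms at a list of positions by `u`. -/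
def replaceList {C F : Type} (t : Tm C F) (l : List (List Bool)) (u : Tm C F) : Tm C F :=
  l.foldl (fun acc p => acc.replaceAt p u) t

/-- Every subterm at a `P`-position is non-root-stable. -/
def NonRS {C F : Type} (R : TRS C F) (P : Set (List Bool)) (t : Tm C F) : Prop :=
  ∀ q ∈ P, ∀ u, t.subtermAt q = some u → ¬ RootStable R u

/-- A derivation which never root-normalizes any subterm at (descendants of) the
tracked positions. -/
inductive NRN {C F : Type} (R : TRS C F) : Set (List Bool) → Tm C F → Tm C F → Prop where
  | refl {P : Set (List Bool)} {t : Tm C F} (h : NonRS R P t) : NRN R P t t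
  | step {P : Set (List Bool)} {t t' t'' : Tm C F} {p : List Bool} {r : Rule C F}
      (hr : r ∈ R) (hst : RewriteAtRule r p t t') (h0 : NonRS R P t)
      (hrec : NRN R (descendSet (p, r) P) t' t'') : NRN R P t t''

/-- A derivation which never contracts a redex at or below (a descendant of) the
tracked positions. -/
inductive NRI {C F : Type} (R : TRS C F) : Set (List Bool) → Tm C F → Tm C F → Prop where
  | refl {P : Set (List Bool)} {t : Tm C F} : NRI R P t t
  | step {P : Set (List Bool)} {t t' t'' : Tm C F} {p : List Bool} {r : Rule C F}
      (hr : r ∈ R) (hst : RewriteAtRule r p t t')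
      (havoid : ∀ q ∈ P, ¬ q <+: p)
      (hrec : NRI R (descendSet (p, r) P) t' t'') : NRI R P t t''

/-- The redex at position `p` of `t` is root-needed: it (or a descendant) is
contracted in every rewrite sequence from `t` to a root-stable term. -/
def RootNeeded {C F : Type} (R : TRS C F) (t : Tm C F) (p : List Bool) : Prop :=
  (∃ u, t.subtermAt p = some u ∧ IsRedex R u) ∧
  ∀ u, NRI R {p} t u → ¬ RootStable R u

/- ### The outermost-needed strategy φ -/

/-- The outermost-needed redex position `φ(t, T)`, as a relation. -/
inductive Phi {C F : Type} (P : ISProg C F) : Tm C F → Set (Tm C F) → List Bool → Prop where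
  | leaf (t π : Tm C F) : Phi P t {π} []
  | intoChild {t : Tm C F} {T : Set (Tm C F)} {π πi : Tm C F} {p : List Bool}
      (hmin : IsMinimum T π) (hbr : ¬ IsMaximalIn T π)
      (hchild : IsChildIn T π πi) (hsubs : Subsumes πi t)
      (hrec : Phi P t (subtree T πi) p) : Phi P t T p
  | intoOp {t : Tm C F} {T : Set (Tm C F)} {π : Tm C F} {o : List Bool}
      {u : Tm C F} {g : F} {p : List Bool}
      (hmin : IsMinimum T π) (hbr : ¬ IsMaximalIn T π)
      (hip : InductivePosOf T π o)
      (hsub : t.subtermAt o = some u) (hhead : u.head = Tm.op g)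
      (hrec : Phi P u (P.dt g) p) : Phi P t T (o ++ p)

/-- An outermost-needed rewrite sequence with explicit step data. -/
inductive ONSeq {C F : Type} (P : ISProg C F) :
    Tm C F → List (List Bool × Rule C F) → Tm C F → Prop where
  | refl (t : Tm C F) : ONSeq P t [] t
  | step {t t' t'' : Tm C F} {p : List Bool} {r : Rule C F}
      {steps : List (List Bool × Rule C F)}
      (hphi : ∃ f : F, t.head = Tm.op f ∧ Phi P t (P.dt f) p)
      (hr : r ∈ P.rules) (hst : RewriteAtRule r p t t')
      (hrec : ONSeq P t' steps t'') : ONSeq P t ((p, r) :: steps) t''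

/-- A needed narrowing derivation following a given list of positions and rules
(rules up to variants), with composed answer substitution. -/
inductive NNSeq {C F : Type} (P : ISProg C F) :
    Tm C F → List (List Bool × Rule C F) → Subst C F → Tm C F → Prop where
  | refl (t : Tm C F) : NNSeq P t [] idS t
  | step {t t₁ t₂ : Tm C F} {p : List Bool} {r rv : Rule C F} {σ τ : Subst C F}
      {steps : List (List Bool × Rule C F)} (f : F) (φs : List (Subst C F))
      (hhead : t.head = Tm.op f) (hnn : NN P t (P.dt f) p rv φs)
      (hvar : RuleVariant r rv) (hσ : σ = compList φs)
      (hst : RewriteAtRule rv p (t.subst σ) t₁)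
      (hrec : NNSeq P t₁ steps τ t₂) :
      NNSeq P t ((p, r) :: steps) (compS σ τ) t₂

/- ### Needed narrowing trees and partial evaluation -/

/-- `u` admits a needed narrowing step. -/
def CanNarrow {C F : Type} (P : ISProg C F) (u : Tm C F) : Prop :=
  ∃ p r σ u', NNStepTriple P u p r σ ∧ RewriteAtRule r p (u.subst σ) u'

/-- A non-failing leaf: a constructor term or a term which can be narrowed. -/
def NonFailing {C F : Type} (P : ISProg C F) (u : Tm C F) : Prop :=
  u.NoOps ∨ CanNarrow P u

/-- `NNTree P t fr`: `fr` is the frontier (list of leaves, each recorded with its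
number of steps and accumulated substitution) of a finite needed narrowing tree for
`t` in `P`, built by repeatedly expanding a leaf by all its needed narrowing steps. -/
inductive NNTree {C F : Type} (P : ISProg C F) :
    Tm C F → List (ℕ × Subst C F × Tm C F) → Prop where
  | root (t : Tm C F) : NNTree P t [(0, idS, t)]
  | expand {t : Tm C F} {pre post : List (ℕ × Subst C F × Tm C F)}
      {n : ℕ} {σ : Subst C F} {u : Tm C F}
      (succs : List (ℕ × Subst C F × Tm C F))
      (htree : NNTree P t (pre ++ (n, σ, u) :: post))
      (hsucc : ∀ e, e ∈ succs ↔ ∃ p r σ' u', NNStepTriple P u p r σ' ∧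
          RewriteAtRule r p (u.subst σ') u' ∧ e = (n + 1, compS σ σ', u')) :
      NNTree P t (pre ++ succs ++ post)

/-- The resultants extracted from the non-failing leaves reached in at least one step. -/
def Resultants {C F : Type} (P : ISProg C F) (t : Tm C F)
    (fr : List (ℕ × Subst C F × Tm C F)) : TRS C F :=
  {lr | ∃ e ∈ fr, 0 < e.1 ∧ NonFailing P e.2.2 ∧ lr = (t.subst e.2.1, e.2.2)}

/- ### Independent renamings and closedness -/

/-- The renamed call `ρ(s) = f_s(x₁,…,xₙ)`. -/
def rhoTm {C F : Type} (fsym : Tm C F → F) (s : Tm C F) : Tm C F :=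
  appVars (Tm.op (fsym s)) s.varList

/-- `fsym` gives an independent renaming of `S`: fresh pairwise distinct symbols. -/
def IndepRenaming {C F : Type} (S : Set (Tm C F)) (fsym : Tm C F → F) : Prop :=
  Set.InjOn fsym S ∧ ∀ s ∈ S, ∀ u ∈ S, fsym s ∉ u.opsIn

def rhoSet {C F : Type} (S : Set (Tm C F)) (fsym : Tm C F → F) : Set (Tm C F) :=
  (rhoTm fsym) '' S

/-- Closedness of a term w.r.t. a set of calls `S`. -/
inductive Closed {C F : Type} (S : Set (Tm C F)) : Tm C F → Prop where
  | var (x : ℕ) : Closed S (Tm.var x)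
  | con (c : C) : Closed S (Tm.con c)
  | app {s t : Tm C F} (hc : ∃ c : C, s.head = Tm.con c)
      (hs : Closed S s) (ht : Closed S t) : Closed S (Tm.app s t)
  | inst {s : Tm C F} (θ : Subst C F) (hs : s ∈ S)
      (hθ : ∀ x ∈ s.vars, Closed S (θ x)) : Closed S (s.subst θ)

/-- The (non-deterministic) renaming function `ren_ρ`, as a relation. -/
inductive Ren {C F : Type} (S : Set (Tm C F)) (fsym : Tm C F → F) :
    Tm C F → Tm C F → Prop where
  | var (x : ℕ) : Ren S fsym (Tm.var x) (Tm.var x)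
  | con (c : C) : Ren S fsym (Tm.con c) (Tm.con c)
  | app {s t s' t' : Tm C F} (hc : ∃ c : C, s.head = Tm.con c)
      (hs : Ren S fsym s s') (ht : Ren S fsym t t') :
      Ren S fsym (Tm.app s t) (Tm.app s' t')
  | inst {s : Tm C F} (θ θ' : Subst C F) (hs : s ∈ S)
      (hθ : ∀ x ∈ s.vars, Ren S fsym (θ x) (θ' x)) :
      Ren S fsym (s.subst θ) ((rhoTm fsym s).subst θ')
  | other {t : Tm C F} (hop : t.OpRooted)
      (hni : ¬ ∃ s ∈ S, ∃ θ : Subst C F, t = s.subst θ) :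
      Ren S fsym t t

/-! Induction on the derivation of `λ`: only case (a) binds a variable, namely the one at the
inductive position of the current term; case (c) continues on a subterm, and the variables of
every instance of a subterm are among those of the same instance of the whole term. -/

namespace Tm

variable {C F : Type}

@[simp]
lemma subst_idS (t : Tm C F) : t.subst idS = t := by
  induction t with
  | var | con | op => rfl
  | app s t ihs iht => simp [subst, ihs, iht]

lemma subst_subst (t : Tm C F) (σ τ : Subst C F) :
    (t.subst σ).subst τ = t.subst (compS σ τ) := by
  induction t with
  | var | con | op => rfl
  | app s t ihs iht => simp [subst, ihs, iht]

@[simp]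
lemma subtermAt_nil (t : Tm C F) : t.subtermAt [] = some t := by
  cases t <;> rfl

lemma vars_subset_of_subtermAt {t u : Tm C F} {o : List Bool} (h : t.subtermAt o = some u) :
    u.vars ⊆ t.vars := by
  induction t generalizing o with
  | app s t ihs iht =>
    match o, h with
    | [], h => cases h; rfl
    | false :: o, h => exact (ihs h).trans Set.subset_union_left
    | true :: o, h => exact (iht h).trans Set.subset_union_right
  | _ =>
    cases o with
    | nil => cases h; rfl
    | cons => simp [subtermAt] at h

lemma subtermAt_subst {t u : Tm C F} {o : List Bool} (σ : Subst C F)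
    (h : t.subtermAt o = some u) : (t.subst σ).subtermAt o = some (u.subst σ) := by
  induction t generalizing o with
  | app s t ihs iht =>
    match o, h with
    | [], h => cases h; rfl
    | false :: o, h => exact ihs h
    | true :: o, h => exact iht h
  | _ =>
    cases o with
    | nil => cases h; exact subtermAt_nil _
    | cons => simp [subtermAt] at h

end Tm

variable {C F : Type}

@[simp]
lemma compList_nil : compList ([] : List (Subst C F)) = idS := rfl

lemma foldl_subst_eq_subst_compList (φs : List (Subst C F)) (t : Tm C F) :
    φs.foldl (fun s φ => s.subst φ) t = t.subst (compList φs) := by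
  induction φs generalizing t with
  | nil => exact (Tm.subst_idS t).symm
  | cons φ φs ih =>
    have hcons : compList (φ :: φs) = compS φ (compList φs) := funext fun x => ih (φ x)
    rw [List.foldl_cons, ih, hcons, Tm.subst_subst]

lemma subst_compList_cons (t : Tm C F) (φ : Subst C F) (φs : List (Subst C F)) :
    t.subst (compList (φ :: φs)) = (t.subst φ).subst (compList φs) := by
  rw [← foldl_subst_eq_subst_compList, List.foldl_cons, foldl_subst_eq_subst_compList]

def IsIdOrConBinding (t : Tm C F) (φ : Subst C F) : Prop :=
  φ = idS ∨ ∃ (x : ℕ) (c : C) (xs : List ℕ), xs.Nodup ∧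
    φ = single x (appVars (Tm.con c) xs) ∧ x ∈ t.vars

def IdOrConBindings : Tm C F → List (Subst C F) → Prop
  | _, [] => True
  | t, φ :: φs => IsIdOrConBinding t φ ∧ IdOrConBindings (t.subst φ) φs

lemma IsIdOrConBinding.mono {t t' : Tm C F} {φ : Subst C F} (h : IsIdOrConBinding t φ)
    (hvars : t.vars ⊆ t'.vars) : IsIdOrConBinding t' φ := by
  rcases h with h | ⟨x, c, xs, hnd, rfl, hx⟩
  · exact Or.inl h
  · exact Or.inr ⟨x, c, xs, hnd, rfl, hvars hx⟩

lemma IdOrConBindings.of_subtermAt {t u : Tm C F} {o : List Bool} (hsub : t.subtermAt o = some u)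
    {φs : List (Subst C F)} (h : IdOrConBindings u φs) : IdOrConBindings t φs := by
  induction φs generalizing t u with
  | nil => trivial
  | cons φ φs ih =>
    exact ⟨h.1.mono (Tm.vars_subset_of_subtermAt hsub), ih (Tm.subtermAt_subst φ hsub) h.2⟩

lemma IdOrConBindings.getD_take {t : Tm C F} {φs : List (Subst C F)}
    (h : IdOrConBindings t φs) (i : ℕ) (hi : i < φs.length) :
    IsIdOrConBinding (t.subst (compList (φs.take i))) (φs.getD i idS) := by
  induction φs generalizing t i with
  | nil => cases hi
  | cons φ φs ih =>
    cases i with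
    | zero => simpa using h.1
    | succ i =>
      rw [List.take_succ_cons, subst_compList_cons]
      exact ih h.2 i (Nat.succ_lt_succ_iff.mp hi)

theorem NN.idOrConBindings {P : ISProg C F} {t : Tm C F} {T : Set (Tm C F)} {p : List Bool}
    {r : Rule C F} {φs : List (Subst C F)} (hnn : NN P t T p r φs) : IdOrConBindings t φs := by
  induction hnn with
  | leaf => exact ⟨Or.inl rfl, trivial⟩
  | branchVar _ _ _ _ x c xs _ _ _ _ _ _ _ _ hfresh _ hvar _ ih =>
    exact ⟨Or.inr ⟨x, c, xs, hfresh.1, rfl, Tm.vars_subset_of_subtermAt hvar rfl⟩, ih⟩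
  | branchCon _ _ _ _ _ _ _ _ _ _ _ _ _ _ _ _ _ _ _ _ ih =>
    exact ⟨Or.inl rfl, by rwa [Tm.subst_idS]⟩
  | branchOp _ _ _ _ _ _ _ _ _ _ _ _ hsub _ _ ih =>
    exact ⟨Or.inl rfl, by rw [Tm.subst_idS]; exact ih.of_subtermAt hsub⟩

theorem stmt1_general {C F : Type} (P : ISProg C F) (t : Tm C F) (T : Set (Tm C F))
    (p : List Bool) (r : Rule C F) (φs : List (Subst C F))
    (hnn : NN P t T p r φs) :
    ∀ i, i < φs.length →
      φs.getD i idS = idS ∨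
      ∃ (x : ℕ) (c : C) (xs : List ℕ), xs.Nodup ∧
        φs.getD i idS = single x (appVars (Tm.con c) xs) ∧
        x ∈ (t.subst (compList (φs.take i))).vars :=
  hnn.idOrConBindings.getD_take

/-- each local substitution in the canonical representation of a
needed narrowing step is the identity or a single-variable binding
`{x ↦ c(x₁,…,xₙ)}` with `x` occurring in `(φ_{i-1} ∘ ⋯ ∘ φ₁)(t)`. -/
theorem stmt1 {C F : Type} (P : ISProg C F) (t : Tm C F) (T : Set (Tm C F))
    (p : List Bool) (r : Rule C F) (φs : List (Subst C F))
    (hop : t.OpRooted)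
    (hdt : ∃ S : Set (Tm C F), IsDefTreeOf T S)
    (hpt : ∃ π, IsMinimum T π ∧ Subsumes π t)
    (hnn : NN P t T p r φs) :
    ∀ i, i < φs.length →
      φs.getD i idS = idS ∨
      ∃ (x : ℕ) (c : C) (xs : List ℕ), xs.Nodup ∧
        φs.getD i idS = single x (appVars (Tm.con c) xs) ∧
        x ∈ (t.subst (compList (φs.take i))).vars :=
  stmt1_general P t T p r φs hnn

end PE
end

section
/- In an almost orthogonal TRS, if t is root-stable and s rewrites to t using only steps at non-root positions (s →*_{>Λ} t), then s is root-stable. -/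
namespace PE

/-!
An inner step `s →_{>Λ} t` is an inner parallel step `s ⇉_{>Λ} t`. In a left-linear system whose
critical pairs are trivial overlays, a parallel step can be pushed past an ordinary one: if
`a ⇉ w` and `a → a₁`, then `w →* w₁` and `a₁ ⇉ w₁` for some `w₁`. A root overlap closes by the
overlay condition, and a step inside the substitution of a contracted redex `l σ → r σ` is
repeated in every copy of that variable in `r`. Moreover an inner parallel step maps a redex
`l σ` to a redex `l τ`, because no left-hand side overlaps the non-variable part of `l` below
the root. Hence, while `t` stays root-stable, each reduct of `s` is `⇉_{>Λ}`-related to a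
reduct of `t`, and so can never be a redex.
-/

namespace Tm

variable {C F : Type}

@[simp] lemma replaceAt_nil (t u : Tm C F) : t.replaceAt [] u = u := by
  cases t <;> rfl

lemma mem_vars_iff_varCount_pos {t : Tm C F} {y : ℕ} : y ∈ t.vars ↔ 0 < t.varCount y := by
  induction t with
  | var x => by_cases h : x = y <;> simp [vars, varCount, h, Ne.symm]
  | con c => simp [vars, varCount]
  | op f => simp [vars, varCount]
  | app a b iha ihb => simp [vars, varCount, iha, ihb]

lemma Linear.of_app {a b : Tm C F} (h : (app a b).Linear) :
    a.Linear ∧ b.Linear ∧ Disjoint a.vars b.vars := by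
  have hsum : ∀ y, a.varCount y + b.varCount y ≤ 1 := h
  refine ⟨fun y => ?_, fun y => ?_, Set.disjoint_left.2 fun y ha hb => ?_⟩
  · have := hsum y; omega
  · have := hsum y; omega
  · rw [mem_vars_iff_varCount_pos] at ha hb
    have := hsum y; omega

lemma subst_congr {t : Tm C F} {σ τ : Subst C F} (h : ∀ y ∈ t.vars, σ y = τ y) :
    t.subst σ = t.subst τ := by
  induction t with
  | var x => exact h x (Set.mem_singleton x)
  | con c => rfl
  | op f => rfl
  | app a b iha ihb =>
      rw [subst, iha fun y hy => h y (Or.inl hy), ihb fun y hy => h y (Or.inr hy), subst]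

lemma mem_vars_of_subtermAt_eq_var :
    ∀ {l : Tm C F} {p : List Bool} {z : ℕ}, l.subtermAt p = some (var z) → z ∈ l.vars
  | l, [], z, h => by
      obtain rfl : l = var z := by simpa using h
      exact Set.mem_singleton z
  | app _ _, false :: _, _, h => Or.inl (mem_vars_of_subtermAt_eq_var h)
  | app _ _, true :: _, _, h => Or.inr (mem_vars_of_subtermAt_eq_var h)
  | var _, _ :: _, _, h | con _, _ :: _, _, h | op _, _ :: _, _, h => by
      simp [subtermAt] at h

lemma subtermAt_subst_eq_some {σ : Subst C F} {w : Tm C F} :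
    ∀ {l : Tm C F} {q : List Bool}, (l.subst σ).subtermAt q = some w →
    (∃ p z b, q = p ++ b ∧ l.subtermAt p = some (var z) ∧ (σ z).subtermAt b = some w) ∨
    (∃ m, l.subtermAt q = some m ∧ (∀ x, m ≠ var x) ∧ w = m.subst σ)
  | var z, q, h => Or.inl ⟨[], z, q, rfl, subtermAt_nil _, h⟩
  | con c, [], h => Or.inr ⟨con c, rfl, fun _ => nofun, by simpa [subst] using h.symm⟩
  | op f, [], h => Or.inr ⟨op f, rfl, fun _ => nofun, by simpa [subst] using h.symm⟩
  | app a b, [], h => Or.inr ⟨app a b, rfl, fun _ => nofun, by simpa using h.symm⟩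
  | con _, _ :: _, h | op _, _ :: _, h => by simp [subst, subtermAt] at h
  | app a _, false :: _, h =>
      (subtermAt_subst_eq_some (l := a) h).imp
        (fun ⟨p, z, b, hq, hp, hz⟩ => ⟨false :: p, z, b, by rw [hq]; rfl, hp, hz⟩) id
  | app _ b, true :: _, h =>
      (subtermAt_subst_eq_some (l := b) h).imp
        (fun ⟨p, z, b, hq, hp, hz⟩ => ⟨true :: p, z, b, by rw [hq]; rfl, hp, hz⟩) id

lemma replaceAt_subst_append {z : ℕ} (σ : Subst C F) (b : List Bool) (u : Tm C F) :
    ∀ {l : Tm C F} {p : List Bool}, l.Linear → l.subtermAt p = some (var z) →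
    (l.subst σ).replaceAt (p ++ b) u = l.subst (Function.update σ z ((σ z).replaceAt b u))
  | l, [], _, h => by
      obtain rfl : l = var z := by simpa using h
      simp [subst]
  | app l₁ l₂, false :: _, hlin, h => by
      obtain ⟨hl₁, -, hd⟩ := hlin.of_app
      have hz := mem_vars_of_subtermAt_eq_var (l := l₁) h
      simp only [subst, List.cons_append, replaceAt]
      rw [replaceAt_subst_append σ b u hl₁ h]
      exact congrArg _ (subst_congr fun y hy =>
        (Function.update_of_ne (fun (e : y = z) => hd.notMem_of_mem_left hz (e ▸ hy)) _ _).symm)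
  | app l₁ l₂, true :: _, hlin, h => by
      obtain ⟨-, hl₂, hd⟩ := hlin.of_app
      have hz := mem_vars_of_subtermAt_eq_var (l := l₂) h
      simp only [subst, List.cons_append, replaceAt]
      rw [replaceAt_subst_append σ b u hl₂ h]
      exact congrArg (app · _) (subst_congr fun y hy =>
        (Function.update_of_ne (fun (e : y = z) => hd.notMem_of_mem_right hz (e ▸ hy)) _ _).symm)
  | var _, _ :: _, _, h | con _, _ :: _, _, h | op _, _ :: _, _, h => by
      simp [subtermAt] at h

end Tm

section Rewriting

variable {C F : Type} {R : TRS C F}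

lemma Rew.app_left {a a' : Tm C F} (b : Tm C F) (h : Rew R a a') :
    Rew R (.app a b) (.app a' b) := by
  obtain ⟨r, hr, p, σ, h₁, rfl⟩ := h
  exact ⟨r, hr, false :: p, σ, h₁, rfl⟩

lemma Rew.app_right {b b' : Tm C F} (a : Tm C F) (h : Rew R b b') :
    Rew R (.app a b) (.app a b') := by
  obtain ⟨r, hr, p, σ, h₁, rfl⟩ := h
  exact ⟨r, hr, true :: p, σ, h₁, rfl⟩

lemma RewStar.app_left {a a' : Tm C F} (b : Tm C F) (h : RewStar R a a') :
    RewStar R (.app a b) (.app a' b) :=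
  Relation.ReflTransGen.lift (Tm.app · b) (fun _ _ => Rew.app_left b) _ _ h

lemma RewStar.app_right {b b' : Tm C F} (a : Tm C F) (h : RewStar R b b') :
    RewStar R (.app a b) (.app a b') :=
  Relation.ReflTransGen.lift (Tm.app a ·) (fun _ _ => Rew.app_right a) _ _ h

lemma RewStar.subst {σ τ : Subst C F} (h : ∀ x, RewStar R (σ x) (τ x)) :
    ∀ m : Tm C F, RewStar R (m.subst σ) (m.subst τ)
  | .var x => h x
  | .con _ | .op _ => .refl
  | .app a b =>
      (RewStar.app_left _ (RewStar.subst h a)).trans (RewStar.app_right _ (RewStar.subst h b))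

lemma Rew.root_or_inner {u v : Tm C F} (h : Rew R u v) :
    (∃ r ∈ R, ∃ σ, u = r.1.subst σ ∧ v = r.2.subst σ) ∨ InnerRew R u v := by
  obtain ⟨r, hr, _ | ⟨d, p⟩, hp⟩ := h
  · obtain ⟨σ, h₁, h₂⟩ := hp
    exact Or.inl ⟨r, hr, σ, by simpa using h₁, by simpa using h₂⟩
  · exact Or.inr ⟨r, hr, d :: p, List.cons_ne_nil _ _, hp⟩

lemma InnerRew.exists_app {u v : Tm C F} (h : InnerRew R u v) :
    ∃ a b, u = .app a b ∧
      ((∃ a', Rew R a a' ∧ v = .app a' b) ∨ (∃ b', Rew R b b' ∧ v = .app a b')) := by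
  obtain ⟨r, hr, _ | ⟨d, p⟩, hp, σ, h₁, rfl⟩ := h
  · exact absurd rfl hp
  cases u with
  | app a b =>
      cases d
      · exact ⟨a, b, rfl, Or.inl ⟨_, ⟨r, hr, p, σ, h₁, rfl⟩, rfl⟩⟩
      · exact ⟨a, b, rfl, Or.inr ⟨_, ⟨r, hr, p, σ, h₁, rfl⟩, rfl⟩⟩
  | _ => simp [Tm.subtermAt] at h₁

/-- Parallel rewriting: contraction of a set of pairwise disjoint redexes. -/
inductive ParRew (R : TRS C F) : Tm C F → Tm C F → Prop
  | refl (t : Tm C F) : ParRew R t t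
  | app {a a' b b' : Tm C F} : ParRew R a a' → ParRew R b b' → ParRew R (.app a b) (.app a' b')
  | red {a b : Tm C F} {r : Rule C F} {σ : Subst C F} :
      r ∈ R → a = r.1.subst σ → b = r.2.subst σ → ParRew R a b

inductive InnerPar (R : TRS C F) : Tm C F → Tm C F → Prop
  | refl (t : Tm C F) : InnerPar R t t
  | app {a a' b b' : Tm C F} : ParRew R a a' → ParRew R b b' → InnerPar R (.app a b) (.app a' b')

lemma ParRew.subst {σ τ : Subst C F} (h : ∀ x, ParRew R (σ x) (τ x)) :
    ∀ m : Tm C F, ParRew R (m.subst σ) (m.subst τ)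
  | .var x => h x
  | .con _ | .op _ => .refl _
  | .app a b => .app (ParRew.subst h a) (ParRew.subst h b)

lemma ParRew.of_rewriteAtRule {r : Rule C F} (hr : r ∈ R) :
    ∀ {p : List Bool} {a b : Tm C F}, RewriteAtRule r p a b → ParRew R a b
  | [], _, _, ⟨_, h₁, h₂⟩ => .red hr (by simpa using h₁) (by simpa using h₂)
  | false :: _, .app _ _, _, ⟨σ, h₁, rfl⟩ => .app (of_rewriteAtRule hr ⟨σ, h₁, rfl⟩) (.refl _)
  | true :: _, .app _ _, _, ⟨σ, h₁, rfl⟩ => .app (.refl _) (of_rewriteAtRule hr ⟨σ, h₁, rfl⟩)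
  | _ :: _, .var _, _, ⟨_, h₁, _⟩ | _ :: _, .con _, _, ⟨_, h₁, _⟩
  | _ :: _, .op _, _, ⟨_, h₁, _⟩ => by simp [Tm.subtermAt] at h₁

lemma ParRew.of_rew {a b : Tm C F} (h : Rew R a b) : ParRew R a b :=
  let ⟨_, hr, _, hp⟩ := h
  of_rewriteAtRule hr hp

lemma InnerPar.of_innerRew {u v : Tm C F} (h : InnerRew R u v) : InnerPar R u v := by
  obtain ⟨a, b, rfl, ⟨a', ha, rfl⟩ | ⟨b', hb, rfl⟩⟩ := h.exists_app
  · exact .app (.of_rew ha) (.refl b)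
  · exact .app (.refl a) (.of_rew hb)

lemma ParRew.innerPar_of_not_isRedex {a w : Tm C F} (h : ParRew R a w) (ha : ¬ IsRedex R a) :
    InnerPar R a w := by
  cases h with
  | refl => exact .refl a
  | app h₁ h₂ => exact .app h₁ h₂
  | red hr h₁ _ => exact absurd ⟨_, hr, _, h₁⟩ ha

lemma RootStable.lhs_ne_var {t : Tm C F} (h : RootStable R t) : ∀ r ∈ R, ∀ x, r.1 ≠ .var x :=
  fun r hr x hx => h t .refl ⟨r, hr, fun _ => t, by rw [hx]; rfl⟩

end Rewriting

section AlmostOrthogonal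

variable {C F : Type} {R : TRS C F}

def NonOverlapping (R : TRS C F) (l : Tm C F) : Prop :=
  ∀ p u, l.subtermAt p = some u → (∀ x, u ≠ .var x) → ∀ σ : Subst C F, ¬ IsRedex R (u.subst σ)

lemma NonOverlapping.app_left {l₁ l₂ : Tm C F} (h : NonOverlapping R (.app l₁ l₂)) :
    NonOverlapping R l₁ :=
  fun p => h (false :: p)

lemma NonOverlapping.app_right {l₁ l₂ : Tm C F} (h : NonOverlapping R (.app l₁ l₂)) :
    NonOverlapping R l₂ :=
  fun p => h (true :: p)

lemma exists_app_subst {Q : Tm C F → Tm C F → Prop} {l₁ l₂ : Tm C F}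
    (hd : Disjoint l₁.vars l₂.vars) {τ : Subst C F} {a b : Tm C F}
    (h₁ : ∃ τ₁, a = l₁.subst τ₁ ∧ ∀ y, Q (τ y) (τ₁ y))
    (h₂ : ∃ τ₂, b = l₂.subst τ₂ ∧ ∀ y, Q (τ y) (τ₂ y)) :
    ∃ τ', Tm.app a b = (Tm.app l₁ l₂).subst τ' ∧ ∀ y, Q (τ y) (τ' y) := by
  classical
  obtain ⟨τ₁, rfl, hτ₁⟩ := h₁
  obtain ⟨τ₂, rfl, hτ₂⟩ := h₂
  refine ⟨fun y => if y ∈ l₁.vars then τ₁ y else τ₂ y, ?_, fun y => ?_⟩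
  · rw [Tm.subst, Tm.subst_congr (t := l₁) fun y hy => if_pos hy,
      Tm.subst_congr (t := l₂) fun y hy => if_neg (hd.notMem_of_mem_right hy)]
  · dsimp only
    split_ifs
    exacts [hτ₁ y, hτ₂ y]

/-- Every redex contracted in the parallel step lies inside the substitution. -/
lemma NonOverlapping.exists_subst_of_parRew {l : Tm C F} (hlin : l.Linear)
    (hno : NonOverlapping R l) {τ : Subst C F} {w : Tm C F} (h : ParRew R (l.subst τ) w) :
    ∃ τ', w = l.subst τ' ∧ ∀ y, ParRew R (τ y) (τ' y) := by
  induction l generalizing w with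
  | var x =>
      refine ⟨Function.update τ x w, by simp [Tm.subst], fun y => ?_⟩
      rcases eq_or_ne y x with rfl | hne
      · simpa [Tm.subst] using h
      · rw [Function.update_of_ne hne]
        exact .refl _
  | con c | op f =>
      cases h.innerPar_of_not_isRedex (hno [] _ (Tm.subtermAt_nil _) (fun _ => nofun) τ)
      exact ⟨τ, rfl, fun _ => .refl _⟩
  | app l₁ l₂ ih₁ ih₂ =>
      obtain ⟨hl₁, hl₂, hd⟩ := hlin.of_app
      cases h.innerPar_of_not_isRedex (hno [] _ (Tm.subtermAt_nil _) (fun _ => nofun) τ) with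
      | refl => exact ⟨τ, rfl, fun _ => .refl _⟩
      | app ha hb => exact exists_app_subst hd (ih₁ hl₁ hno.app_left ha) (ih₂ hl₂ hno.app_right hb)

variable (hao : AlmostOrthogonal R)
include hao

lemma AlmostOrthogonal.not_isRedex_of_subtermAt {r : Rule C F} (hr : r ∈ R) {p : List Bool}
    (hp : p ≠ []) {u : Tm C F} (hu : r.1.subtermAt p = some u) (hnv : ∀ x, u ≠ .var x)
    (σ : Subst C F) : ¬ IsRedex R (u.subst σ) := by
  rintro ⟨r', hr', σ', he⟩
  exact hp (hao.2 r hr r' hr' p u σ σ' hu hnv he).1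

lemma AlmostOrthogonal.nonOverlapping_of_lhs_eq_app {r : Rule C F} (hr : r ∈ R)
    {l₁ l₂ : Tm C F} (hl : r.1 = .app l₁ l₂) : NonOverlapping R l₁ ∧ NonOverlapping R l₂ :=
  ⟨fun p _ hu => hao.not_isRedex_of_subtermAt hr (List.cons_ne_nil false p) (hl ▸ hu),
    fun p _ hu => hao.not_isRedex_of_subtermAt hr (List.cons_ne_nil true p) (hl ▸ hu)⟩

lemma AlmostOrthogonal.exists_subst_of_innerPar (hnv : ∀ r ∈ R, ∀ x, r.1 ≠ .var x)
    {r : Rule C F} (hr : r ∈ R) {τ : Subst C F} {w : Tm C F} (h : InnerPar R (r.1.subst τ) w) :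
    ∃ τ', w = r.1.subst τ' ∧ ∀ y, ParRew R (τ y) (τ' y) := by
  generalize hu : r.1.subst τ = u at h
  cases h with
  | refl => exact ⟨τ, hu.symm, fun _ => .refl _⟩
  | app ha hb =>
      cases hl : r.1 with
      | var x => exact absurd hl (hnv r hr x)
      | con _ | op _ => rw [hl] at hu; cases hu
      | app l₁ l₂ =>
          rw [hl, Tm.subst] at hu
          obtain ⟨rfl, rfl⟩ := Tm.app.inj hu
          obtain ⟨hl₁, hl₂, hd⟩ := (hl ▸ hao.1 r hr).of_app
          obtain ⟨hno₁, hno₂⟩ := hao.nonOverlapping_of_lhs_eq_app hr hl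
          exact exists_app_subst hd (hno₁.exists_subst_of_parRew hl₁ ha)
            (hno₂.exists_subst_of_parRew hl₂ hb)

lemma AlmostOrthogonal.exists_rewStar_of_parRew (hnv : ∀ r ∈ R, ∀ x, r.1 ≠ .var x)
    {a w : Tm C F} (h : ParRew R a w) :
    ∀ {a₁ : Tm C F}, Rew R a a₁ → ∃ w₁, RewStar R w w₁ ∧ ParRew R a₁ w₁ := by
  induction h with
  | refl t => exact fun hs => ⟨_, .single hs, .refl _⟩
  | app ha hb iha ihb =>
      intro a₁ hs
      rcases hs.root_or_inner with ⟨r, hr, σ, he, rfl⟩ | hin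
      · have hp : InnerPar R (r.1.subst σ) _ := he ▸ InnerPar.app ha hb
        obtain ⟨τ, hτ, hστ⟩ := hao.exists_subst_of_innerPar hnv hr hp
        exact ⟨r.2.subst τ, .single ⟨r, hr, [], τ, by simp [hτ], by simp⟩, .subst hστ _⟩
      obtain ⟨x, y, hxy, ⟨x₁, hx, rfl⟩ | ⟨y₁, hy, rfl⟩⟩ := hin.exists_app <;>
        obtain ⟨rfl, rfl⟩ := Tm.app.inj hxy
      · obtain ⟨w₁, hw₁, hp⟩ := iha hx
        exact ⟨_, hw₁.app_left _, .app hp hb⟩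
      · obtain ⟨w₁, hw₁, hp⟩ := ihb hy
        exact ⟨_, hw₁.app_right _, .app ha hp⟩
  | @red _ _ r σ hr ha hb =>
      intro a₁ hs
      subst ha hb
      rcases hs.root_or_inner with ⟨r', hr', σ', he, rfl⟩ | ⟨r', hr', q, hq, σ', h₁, rfl⟩
      · rw [(hao.2 r hr r' hr' [] r.1 σ σ' (Tm.subtermAt_nil _) (hnv r hr) he).2]
        exact ⟨_, .refl, .refl _⟩
      rcases Tm.subtermAt_subst_eq_some h₁ with ⟨p, z, b, rfl, hz, hb⟩ | ⟨m, hm, hmv, he⟩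
      · -- the step happens inside `σ z`: perform it in every copy of `z` in the right-hand side
        refine ⟨r.2.subst (Function.update σ z ((σ z).replaceAt b (r'.2.subst σ'))),
          RewStar.subst (fun y => ?_) _,
          .red hr (Tm.replaceAt_subst_append _ _ _ (hao.1 r hr) hz) rfl⟩
        rcases eq_or_ne y z with rfl | hne
        · rw [Function.update_self]
          exact .single ⟨r', hr', b, σ', hb, rfl⟩
        · rw [Function.update_of_ne hne]
          exact .refl
      · exact absurd ⟨r', hr', σ', he.symm⟩ (hao.not_isRedex_of_subtermAt hr hq hm hmv σ)

lemma AlmostOrthogonal.isRedex_of_innerPar (hnv : ∀ r ∈ R, ∀ x, r.1 ≠ .var x)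
    {u w : Tm C F} (h : InnerPar R u w) (hu : IsRedex R u) : IsRedex R w := by
  obtain ⟨r, hr, σ, rfl⟩ := hu
  obtain ⟨τ, rfl, -⟩ := hao.exists_subst_of_innerPar hnv hr h
  exact ⟨r, hr, τ, rfl⟩

lemma AlmostOrthogonal.exists_rewStar_of_innerPar (hnv : ∀ r ∈ R, ∀ x, r.1 ≠ .var x)
    {v w v₁ : Tm C F} (h : InnerPar R v w) (hw : ¬ IsRedex R w) (hs : Rew R v v₁) :
    ∃ w₁, RewStar R w w₁ ∧ InnerPar R v₁ w₁ := by
  rcases hs.root_or_inner with ⟨r, hr, σ, rfl, -⟩ | hin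
  · exact absurd (hao.isRedex_of_innerPar hnv h ⟨r, hr, σ, rfl⟩) hw
  obtain ⟨x, y, rfl, ⟨x₁, hx, rfl⟩ | ⟨y₁, hy, rfl⟩⟩ := hin.exists_app <;>
    cases h with
    | refl => exact ⟨_, .single hs, .refl _⟩
    | app hpx hpy => ?_
  · obtain ⟨w₁, hw₁, hp⟩ := hao.exists_rewStar_of_parRew hnv hpx hx
    exact ⟨_, hw₁.app_left _, .app hp hpy⟩
  · obtain ⟨w₁, hw₁, hp⟩ := hao.exists_rewStar_of_parRew hnv hpy hy
    exact ⟨_, hw₁.app_right _, .app hpx hp⟩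

lemma AlmostOrthogonal.exists_innerPar_of_rewStar {s t : Tm C F} (hrs : RootStable R t)
    (h : InnerPar R s t) {u : Tm C F} (hu : RewStar R s u) :
    ∃ w, RewStar R t w ∧ InnerPar R u w := by
  induction hu with
  | refl => exact ⟨t, .refl, h⟩
  | tail _ hstep ih =>
      obtain ⟨w, hw, hp⟩ := ih
      obtain ⟨w₁, hw₁, hp₁⟩ :=
        hao.exists_rewStar_of_innerPar hrs.lhs_ne_var hp (hrs w hw) hstep
      exact ⟨w₁, hw.trans hw₁, hp₁⟩

lemma AlmostOrthogonal.rootStable_of_innerPar {s t : Tm C F} (hrs : RootStable R t)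
    (h : InnerPar R s t) : RootStable R s := fun _ hu hred =>
  let ⟨w, hw, hp⟩ := hao.exists_innerPar_of_rewStar hrs h hu
  hrs w hw (hao.isRedex_of_innerPar hrs.lhs_ne_var hp hred)

end AlmostOrthogonal

/-- in an almost orthogonal TRS, root-stability is preserved
backwards along inner rewrite sequences. -/
theorem stmt8 {C F : Type} (R : TRS C F) (hao : AlmostOrthogonal R)
    (s t : Tm C F) (hrs : RootStable R t)
    (hinner : Relation.ReflTransGen (InnerRew R) s t) :
    RootStable R s := by
  induction hinner using Relation.ReflTransGen.head_induction_on with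
  | refl => exact hrs
  | head hstep _ ih => exact hao.rootStable_of_innerPar ih (.of_innerRew hstep)

end PE
end
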